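/- Every sg_λ-closed subset of an sλ-compact generalized topological space is sλ-compact (every cover of it by sλ-open sets has a finite subcover). -/
import Mathlib


open Set

variable {Y : Type*}

/-- A generalized topology: contains ∅ and is closed under arbitrary unions. -/
def IsGT (γ : Set (Set Y)) : Prop := ∅ ∈ γ ∧ ∀ S ⊆ γ, ⋃₀ S ∈ γ

/-- γ-closure: intersection of all γ-closed supersets. -/
def gCl (γ : Set (Set Y)) (D : Set Y) : Set Y := ⋂₀ {C | Cᶜ ∈ γ ∧ D ⊆ C}

/-- sγ-open set. -/
def SOpen (γ : Set (Set Y)) (D : Set Y) : Prop := ∃ V ∈ γ, V ⊆ D ∧ D ⊆ gCl γ V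

/-- sγ-closed set. -/
def SClosed (γ : Set (Set Y)) (D : Set Y) : Prop := SOpen γ Dᶜ

/-- semi-kernel: intersection of all sγ-open supersets. -/
def sKer (γ : Set (Set Y)) (D : Set Y) : Set Y := ⋂₀ {G | SOpen γ G ∧ D ⊆ G}

/-- sγ-closure: intersection of all sγ-closed supersets. -/
def sCl (γ : Set (Set Y)) (D : Set Y) : Set Y := ⋂₀ {C | SClosed γ C ∧ D ⊆ C}

/-- sλ-closed set. -/
def SLClosed (γ : Set (Set Y)) (D : Set Y) : Prop :=
  ∃ M N : Set Y, M = sKer γ M ∧ SClosed γ N ∧ D = M ∩ N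

/-- sλ-open set. -/
def SLOpen (γ : Set (Set Y)) (D : Set Y) : Prop := SLClosed γ Dᶜ

/-- sλ-closure: intersection of all sλ-closed supersets. -/
def slCl (γ : Set (Set Y)) (D : Set Y) : Set Y := ⋂₀ {C | SLClosed γ C ∧ D ⊆ C}

/-- sλ-interior: union of all sλ-open subsets. -/
def slInt (γ : Set (Set Y)) (D : Set Y) : Set Y := ⋃₀ {U | SLOpen γ U ∧ U ⊆ D}

/-- sg_λ-closed set. -/
def SgClosed (γ : Set (Set Y)) (D : Set Y) : Prop :=
  ∀ V : Set Y, SLOpen γ V → D ⊆ V → slCl γ D ⊆ V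

/-- sg_λ-open set. -/
def SgOpen (γ : Set (Set Y)) (D : Set Y) : Prop := SgClosed γ Dᶜ

/-- sλR₀: every sλ-open set contains the sλ-closure of each of its singletons. -/
def SLR0 (γ : Set (Set Y)) : Prop :=
  ∀ G : Set Y, SLOpen γ G → ∀ y ∈ G, slCl γ {y} ⊆ G

/-- sλR₁. -/
def SLR1 (γ : Set (Set Y)) : Prop :=
  ∀ p q : Y, p ∉ slCl γ {q} →
    ∃ E F : Set Y, SLOpen γ E ∧ SLOpen γ F ∧ p ∈ E ∧ q ∈ F ∧ E ∩ F = ∅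

/-- sλT₁. -/
def SLT1 (γ : Set (Set Y)) : Prop :=
  ∀ p q : Y, p ≠ q →
    ∃ E F : Set Y, SLOpen γ E ∧ SLOpen γ F ∧ p ∈ E ∧ q ∉ E ∧ q ∈ F ∧ p ∉ F

/-- sλT₂ (sλ-Hausdorff). -/
def SLT2 (γ : Set (Set Y)) : Prop :=
  ∀ p q : Y, p ≠ q →
    ∃ E F : Set Y, SLOpen γ E ∧ SLOpen γ F ∧ p ∈ E ∧ q ∈ F ∧ E ∩ F = ∅

/-- sλ-regular. -/
def SLRegular (γ : Set (Set Y)) : Prop :=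
  ∀ A : Set Y, SLClosed γ A → ∀ p : Y, p ∉ A →
    ∃ E F : Set Y, SLOpen γ E ∧ SLOpen γ F ∧ A ⊆ E ∧ p ∈ F ∧
      slCl γ E ∩ slCl γ F = ∅

/-- sλ-normal. -/
def SLNormal (γ : Set (Set Y)) : Prop :=
  ∀ A B : Set Y, SLClosed γ A → SLClosed γ B → A ∩ B = ∅ →
    ∃ E F : Set Y, SLOpen γ E ∧ SLOpen γ F ∧ A ⊆ E ∧ B ⊆ F ∧
      slCl γ E ∩ slCl γ F = ∅

/-- sλ-compact. -/
def SLCompact (γ : Set (Set Y)) : Prop :=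
  ∀ 𝒞 : Set (Set Y), (∀ U ∈ 𝒞, SLOpen γ U) → ⋃₀ 𝒞 = univ →
    ∃ 𝒟 : Finset (Set Y), ↑𝒟 ⊆ 𝒞 ∧ ⋃₀ (𝒟 : Set (Set Y)) = univ

/-- sλ-weakly separated. -/
def SLWeaklySeparated (γ : Set (Set Y)) (G H : Set Y) : Prop :=
  (G ∩ slCl γ H) ∪ (H ∩ slCl γ G) = ∅

/-- sλ-completely normal. -/
def SLCompletelyNormal (γ : Set (Set Y)) : Prop :=
  ∀ G H : Set Y, SLWeaklySeparated γ G H →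
    ∃ U V : Set Y, SLOpen γ U ∧ SLOpen γ V ∧ G ⊆ U ∧ H ⊆ V ∧
      slCl γ U ∩ slCl γ V = ∅

/-- sλ-continuous real-valued function. -/
def SLContinuousReal (γ : Set (Set Y)) (f : Y → ℝ) : Prop :=
  ∀ s : Set ℝ, IsOpen s → SLOpen γ (f ⁻¹' s)

lemma gCl_mono' {γ : Set (Set Y)} {A B : Set Y} (h : A ⊆ B) : gCl γ A ⊆ gCl γ B := by
  intro x hx C hC
  exact hx C ⟨hC.1, h.trans hC.2⟩

lemma sKer_mono' {γ : Set (Set Y)} {A B : Set Y} (h : A ⊆ B) : sKer γ A ⊆ sKer γ B := by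
  intro x hx C hC
  exact hx C ⟨hC.1, h.trans hC.2⟩

lemma sOpen_sUnion' {γ : Set (Set Y)} (hγ : IsGT γ) {S : Set (Set Y)}
    (h : ∀ U ∈ S, SOpen γ U) : SOpen γ (⋃₀ S) := by
  choose V hVγ hVsub hVcl using h
  refine ⟨⋃₀ {W | ∃ U, ∃ hU : U ∈ S, W = V U hU}, ?_, ?_, ?_⟩
  · apply hγ.2
    rintro W ⟨U, hU, rfl⟩
    exact hVγ U hU
  · rintro x ⟨W, ⟨U, hU, rfl⟩, hx⟩
    exact ⟨U, hU, hVsub U hU hx⟩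
  · rintro x ⟨U, hU, hx⟩
    refine gCl_mono' ?_ (hVcl U hU hx)
    intro y hy
    exact ⟨V U hU, ⟨U, hU, rfl⟩, hy⟩

lemma slClosed_sInter' {γ : Set (Set Y)} (hγ : IsGT γ) {S : Set (Set Y)}
    (h : ∀ C ∈ S, SLClosed γ C) : SLClosed γ (⋂₀ S) := by
  choose M N hM hN hMN using h
  refine ⟨⋂₀ {A | ∃ C, ∃ hC : C ∈ S, A = M C hC},
          ⋂₀ {A | ∃ C, ∃ hC : C ∈ S, A = N C hC}, ?_, ?_, ?_⟩
  · apply Subset.antisymm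
    · intro x hx G hG
      exact hG.2 hx
    · rintro x hx A ⟨C, hC, rfl⟩
      have h1 : ⋂₀ {A | ∃ C, ∃ hC : C ∈ S, A = M C hC} ⊆ M C hC := by
        intro y hy; exact hy _ ⟨C, hC, rfl⟩
      have := sKer_mono' h1 hx
      rw [← hM C hC] at this
      exact this
  · show SOpen γ _
    have : (⋂₀ {A | ∃ C, ∃ hC : C ∈ S, A = N C hC})ᶜ
        = ⋃₀ {A | ∃ C, ∃ hC : C ∈ S, A = (N C hC)ᶜ} := by
      rw [Set.compl_sInter]
      ext x
      simp only [Set.mem_sUnion, Set.mem_image, Set.mem_setOf_eq]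
      constructor
      · rintro ⟨B, ⟨A, ⟨C, hC, rfl⟩, rfl⟩, hx⟩
        exact ⟨(N C hC)ᶜ, ⟨C, hC, rfl⟩, hx⟩
      · rintro ⟨B, ⟨C, hC, rfl⟩, hx⟩
        exact ⟨(N C hC)ᶜ, ⟨N C hC, ⟨C, hC, rfl⟩, rfl⟩, hx⟩
    rw [this]
    apply sOpen_sUnion' hγ
    rintro U ⟨C, hC, rfl⟩
    exact hN C hC
  · ext x
    simp only [Set.mem_inter_iff, Set.mem_sInter, Set.mem_setOf_eq]
    constructor
    · intro hx
      constructor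
      · rintro A ⟨C, hC, rfl⟩
        have := hx C hC; rw [hMN C hC] at this; exact this.1
      · rintro A ⟨C, hC, rfl⟩
        have := hx C hC; rw [hMN C hC] at this; exact this.2
    · rintro ⟨h1, h2⟩ C hC
      rw [hMN C hC]
      exact ⟨h1 _ ⟨C, hC, rfl⟩, h2 _ ⟨C, hC, rfl⟩⟩

lemma slClosed_slCl' {γ : Set (Set Y)} (hγ : IsGT γ) (D : Set Y) :
    SLClosed γ (slCl γ D) :=
  slClosed_sInter' hγ (fun _ hC => hC.1)

theorem stmt10 (γ : Set (Set Y)) (hγ : IsGT γ) (hcomp : SLCompact γ)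
    (D : Set Y) (hD : SgClosed γ D) :
    ∀ 𝒞 : Set (Set Y), (∀ U ∈ 𝒞, SLOpen γ U) → D ⊆ ⋃₀ 𝒞 →
      ∃ 𝒟 : Finset (Set Y), ↑𝒟 ⊆ 𝒞 ∧ D ⊆ ⋃₀ (𝒟 : Set (Set Y)) := by
  classical
  intro 𝒞 hopen hcov
  set A := slCl γ D with hA
  have hAcl : SLClosed γ A := slClosed_slCl' hγ D
  have hUopen : SLOpen γ (⋃₀ 𝒞) := by
    show SLClosed γ _
    rw [Set.compl_sUnion]
    apply slClosed_sInter' hγ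
    rintro C ⟨U, hU, rfl⟩
    exact hopen U hU
  have hAsub : A ⊆ ⋃₀ 𝒞 := hD _ hUopen hcov
  have hDA : D ⊆ A := fun x hx C hC => hC.2 hx
  have hAcopen : SLOpen γ Aᶜ := by
    show SLClosed γ _
    rw [compl_compl]; exact hAcl
  obtain ⟨𝒟', h𝒟'sub, h𝒟'cov⟩ := hcomp (insert Aᶜ 𝒞)
    (by rintro U hU
        rcases Set.mem_insert_iff.1 hU with rfl | hU
        · exact hAcopen
        · exact hopen U hU)
    (by apply Set.eq_univ_of_forall
        intro x
        by_cases hx : x ∈ A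
        · obtain ⟨U, hU, hxU⟩ := hAsub hx
          exact ⟨U, Set.mem_insert_of_mem _ hU, hxU⟩
        · exact ⟨Aᶜ, Set.mem_insert _ _, hx⟩)
  refine ⟨𝒟'.erase Aᶜ, ?_, ?_⟩
  · intro U hU
    simp only [Finset.coe_erase, Set.mem_diff, Set.mem_singleton_iff] at hU
    rcases Set.mem_insert_iff.1 (h𝒟'sub hU.1) with rfl | h
    · exact absurd rfl hU.2
    · exact h
  · intro x hx
    have hxA : x ∈ A := hDA hx
    have : x ∈ ⋃₀ (𝒟' : Set (Set Y)) := h𝒟'cov ▸ Set.mem_univ x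
    obtain ⟨U, hU, hxU⟩ := this
    refine ⟨U, ?_, hxU⟩
    simp only [Finset.coe_erase, Set.mem_diff, Set.mem_singleton_iff]
    refine ⟨hU, fun h => ?_⟩
    rw [h] at hxU
    exact hxU hxA
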